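/- arXiv:math/0311480 — 2 statements merged into one kernel-verified Lean document; each statement's English description precedes it below -/
import Mathlib

section
/- Let E_κ(z) = exp(z) + κ with Re(κ) ≥ 2, and let z ∈ ℂ with Re(z) ≤ Re(κ) + 1. Then for all k ≥ 1, |Re(E_κ^k(z))| ≤ F^k(Re(κ) + 2) - 1, where F(t) = e^t - 1 and E_κ^k denotes the k-th iterate. -/
/-- Model function for exponential growth: F(t) = e^t - 1. -/
noncomputable def F (t : ℝ) : ℝ := Real.exp t - 1

/-- The exponential map E_κ(z) = exp(z) + κ. -/
noncomputable def E (κ : ℂ) (z : ℂ) : ℂ := Complex.exp z + κ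

/-!
Write `c = Re κ`. Since `|Re (exp w)| ≤ exp (Re w)`, one step of `E_κ` sends a point with
`Re w ≤ t - 1` to one with `|Re E_κ(w)| ≤ exp (t - 1) + c`, and this is at most `F t - 1`
as soon as `t ≥ c + 2`, because then `exp t - exp (t - 1) ≥ exp (t - 1) ≥ t ≥ c + 2`.
As `F t ≥ t`, the condition `t ≥ c + 2` propagates along the orbit of `F`, starting from
`t = c + 2`, where `Re z ≤ t - 1` is the hypothesis.
-/

lemma le_F (t : ℝ) : t ≤ F t := by
  have := Real.add_one_le_exp t
  rw [F]
  linarith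

lemma abs_re_E_le (κ w : ℂ) : |(E κ w).re| ≤ Real.exp w.re + |κ.re| := by
  rw [E, Complex.add_re]
  calc |(Complex.exp w).re + κ.re| ≤ |(Complex.exp w).re| + |κ.re| := abs_add_le _ _
    _ ≤ Real.exp w.re + |κ.re| := by
      gcongr
      exact (Complex.abs_re_le_norm _).trans (Complex.norm_exp w).le

lemma exp_sub_one_add_le {c t : ℝ} (hct : c + 2 ≤ t) : Real.exp (t - 1) + c ≤ Real.exp t - 2 := by
  have h_exp_ge : t ≤ Real.exp (t - 1) := by linarith [Real.add_one_le_exp (t - 1)]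
  have h_exp_one : 2 ≤ Real.exp 1 := by linarith [Real.add_one_le_exp (1 : ℝ)]
  have h_split : Real.exp t = Real.exp (t - 1) * Real.exp 1 := by
    rw [← Real.exp_add, sub_add_cancel]
  nlinarith [Real.exp_pos (t - 1)]

lemma abs_re_E_le_F_sub_one {κ w : ℂ} {t : ℝ} (hκ : 0 ≤ κ.re) (ht : κ.re + 2 ≤ t)
    (hw : w.re ≤ t - 1) : |(E κ w).re| ≤ F t - 1 := by
  calc |(E κ w).re| ≤ Real.exp w.re + κ.re := by
        simpa only [abs_of_nonneg hκ] using abs_re_E_le κ w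
    _ ≤ Real.exp (t - 1) + κ.re := by gcongr
    _ ≤ F t - 1 := by
        rw [F]
        linarith [exp_sub_one_add_le ht]

lemma abs_re_E_iterate_succ_le {κ : ℂ} (hκ : 0 ≤ κ.re) (n : ℕ) :
    ∀ {w : ℂ} {t : ℝ}, κ.re + 2 ≤ t → w.re ≤ t - 1 →
      |((E κ)^[n + 1] w).re| ≤ F^[n + 1] t - 1 := by
  induction n with
  | zero =>
    intro w t ht hw
    simpa only [zero_add, Function.iterate_one] using abs_re_E_le_F_sub_one hκ ht hw
  | succ n ih =>
    intro w t ht hw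
    have h_step := abs_re_E_le_F_sub_one hκ ht hw
    rw [Function.iterate_succ_apply, Function.iterate_succ_apply]
    exact ih (ht.trans (le_F t)) ((le_abs_self _).trans h_step)

/-- If Re(κ) ≥ 2 and Re(z) ≤ Re(κ) + 1, then for all k ≥ 1,
    |Re(E_κ^k(z))| ≤ F^k(Re(κ) + 2) - 1. -/
theorem re_iterate_bound (κ z : ℂ) (hκ : 2 ≤ κ.re) (hz : z.re ≤ κ.re + 1) :
    ∀ k : ℕ, 1 ≤ k → |((E κ)^[k] z).re| ≤ F^[k] (κ.re + 2) - 1 := by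
  intro k hk
  obtain ⟨n, rfl⟩ := Nat.exists_eq_add_of_le' hk
  exact abs_re_E_iterate_succ_le (by linarith) n le_rfl (by linarith)
end

section
/- Let κ ∈ ℂ with Re(κ) ≥ 4 and let n ≥ 2. Suppose κ is exponentially κ-bounded for n steps (Re(κ) ≥ 4, |Im(E_κ^{k-1}(κ))| < F^{k-1}(Re(κ)-2) for 1 ≤ k ≤ n, Re(E_κ^{k-1}(κ)) > 0 for 1 ≤ k ≤ n-1) and that Re(E_κ^{n-1}(κ)) < 0. Then Re(E_κ^{n-1}(κ)) < -F^{n-1}(Re(κ) - 1), where F(t) = e^t - 1. -/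
/-- κ is exponentially κ-bounded for n steps. -/
def ExpBounded (κ : ℂ) (n : ℕ) : Prop :=
  4 ≤ κ.re ∧
  (∀ k : ℕ, k < n → |((E κ)^[k] κ).im| < F^[k] (κ.re - 2)) ∧
  (∀ k : ℕ, k + 1 < n → 0 < ((E κ)^[k] κ).re)

/-!
Write `z k = (E κ)^[k] κ` and `C = F^[k] (κ.re - 1)`. If `C + 1 ≤ (z k).re`, then
`‖exp (z k)‖ ≥ e · exp C`, while the bound on `(z (k + 1)).im = (exp (z k)).im + κ.im` gives
`|(exp (z k)).im| ≤ 2 exp C`. Hence `|(exp (z k)).re| ≥ (3/2) exp C`, which dwarfs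
`κ.re ≤ exp C / 4`, so `(z (k + 1)).re = (exp (z k)).re + κ.re` is either `≥ F C + 1` or `< -F C`.
Positivity of the real parts keeps the first alternative up to step `n - 2`, and negativity at
step `n - 1` selects the second.
-/

lemma le_iterate_F (k : ℕ) (t : ℝ) : t ≤ F^[k] t :=
  Function.id_le_iterate_of_id_le
    (fun t => by simp only [id, F]; linarith [Real.add_one_le_exp t]) k t

lemma monotone_iterate_F (k : ℕ) : Monotone F^[k] :=
  Monotone.iterate (fun _ _ h => by simp only [F]; gcongr) k

lemma four_mul_add_one_le_exp {t : ℝ} (ht : 3 ≤ t) : 4 * (t + 1) ≤ Real.exp t := by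
  have he : (20 : ℝ) ≤ Real.exp 3 := by
    rw [show (3 : ℝ) = (3 : ℕ) * 1 by norm_num, Real.exp_nat_mul]
    calc (20 : ℝ) ≤ 2.7182818283 ^ 3 := by norm_num
      _ ≤ Real.exp 1 ^ 3 := by gcongr; exact Real.exp_one_gt_d9.le
  calc 4 * (t + 1) ≤ 20 * (t - 3 + 1) := by linarith
    _ ≤ Real.exp 3 * Real.exp (t - 3) := by
        gcongr; exact Real.add_one_le_exp _
    _ = Real.exp t := by rw [← Real.exp_add]; ring_nf

lemma Complex.le_abs_re_of_sq_add_sq_im_le {w : ℂ} {a : ℝ} (ha : 0 ≤ a)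
    (h : a ^ 2 + w.im ^ 2 ≤ ‖w‖ ^ 2) : a ≤ |w.re| := by
  rw [← abs_of_nonneg ha, ← sq_le_sq, ← Complex.sq_norm_sub_sq_im]
  linarith

lemma re_exp_add_dichotomy {κ z : ℂ} {C : ℝ} (hκ : 4 ≤ κ.re) (hκim : |κ.im| < κ.re - 2)
    (hC : κ.re - 1 ≤ C) (hz : C + 1 ≤ z.re) (him : |(Complex.exp z + κ).im| < F C) :
    F C + 1 ≤ (Complex.exp z + κ).re ∨ (Complex.exp z + κ).re < -F C := by
  set w := Complex.exp z
  have hκE : 4 * κ.re ≤ Real.exp C := by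
    have := four_mul_add_one_le_exp (t := κ.re - 1) (by linarith)
    have := Real.exp_le_exp.2 hC
    linarith
  have hwim : |w.im| ≤ 2 * Real.exp C := calc
    |w.im| = |(w + κ).im - κ.im| := by simp
    _ ≤ |(w + κ).im| + |κ.im| := abs_sub _ _
    _ ≤ 2 * Real.exp C := by simp only [F] at him; linarith
  have hnorm : Real.exp 1 * Real.exp C ≤ ‖w‖ := by
    rw [Complex.norm_exp, ← Real.exp_add]
    exact Real.exp_le_exp.2 (by linarith)
  have hwre : 3 / 2 * Real.exp C ≤ |w.re| := by
    apply Complex.le_abs_re_of_sq_add_sq_im_le (by positivity)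
    have h1 : w.im ^ 2 ≤ (2 * Real.exp C) ^ 2 := sq_le_sq' (abs_le.1 hwim).1 (abs_le.1 hwim).2
    have h2 : (5 / 2 * Real.exp C) ^ 2 ≤ ‖w‖ ^ 2 := by
      gcongr
      nlinarith [Real.exp_one_gt_d9]
    nlinarith
  simp only [F, Complex.add_re]
  rcases abs_cases w.re with ⟨habs, _⟩ | ⟨habs, _⟩
  · left; linarith
  · right; linarith

namespace ExpBounded

variable {κ : ℂ} {n : ℕ}

lemma re_iterate_succ_dichotomy (h : ExpBounded κ n) {k : ℕ} (hk : k + 2 ≤ n)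
    (hz : F^[k] (κ.re - 1) + 1 ≤ ((E κ)^[k] κ).re) :
    F^[k + 1] (κ.re - 1) + 1 ≤ ((E κ)^[k + 1] κ).re ∨
      ((E κ)^[k + 1] κ).re < -F^[k + 1] (κ.re - 1) := by
  obtain ⟨hκ, him, -⟩ := h
  have him' : |((E κ)^[k + 1] κ).im| < F^[k + 1] (κ.re - 1) :=
    (him (k + 1) (by omega)).trans_le (monotone_iterate_F _ (by linarith))
  rw [Function.iterate_succ_apply' (E κ), Function.iterate_succ_apply' F] at him' ⊢
  exact re_exp_add_dichotomy hκ (by simpa using him 0 (by omega)) (le_iterate_F k _) hz him'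

lemma add_one_le_re_iterate (h : ExpBounded κ n) {k : ℕ} (hk : k + 1 < n) :
    F^[k] (κ.re - 1) + 1 ≤ ((E κ)^[k] κ).re := by
  induction k with
  | zero => simp
  | succ k ih =>
    refine (h.re_iterate_succ_dichotomy (k := k) (by omega) (ih (by omega))).resolve_right
      fun hlt => ?_
    have := h.2.2 (k + 1) hk
    have := le_iterate_F (k + 1) (κ.re - 1)
    linarith [h.1]

end ExpBounded

theorem re_strongly_negative_general (κ : ℂ) (n : ℕ) (h : ExpBounded κ n)
    (hneg : ((E κ)^[n - 1] κ).re < 0) :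
    ((E κ)^[n - 1] κ).re < -F^[n - 1] (κ.re - 1) := by
  cases hm : n - 1 with
  | zero =>
    rw [hm, Function.iterate_zero_apply] at hneg
    linarith [h.1]
  | succ m =>
    rw [hm] at hneg
    refine (h.re_iterate_succ_dichotomy (by omega)
      (h.add_one_le_re_iterate (by omega))).resolve_left fun hge => ?_
    have := le_iterate_F (m + 1) (κ.re - 1)
    linarith [h.1]

/-- If κ is exponentially κ-bounded for n ≥ 2 steps and Re(E_κ^{n-1}(κ)) < 0, then
    Re(E_κ^{n-1}(κ)) < -F^{n-1}(Re(κ) - 1). -/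
theorem re_strongly_negative (κ : ℂ) (n : ℕ) (hn : 2 ≤ n) (h : ExpBounded κ n)
    (hneg : ((E κ)^[n - 1] κ).re < 0) :
    ((E κ)^[n - 1] κ).re < -F^[n - 1] (κ.re - 1) :=
  re_strongly_negative_general κ n h hneg
end
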